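/- Let f be (k+1)-times continuously differentiable on [0, kδ] for a positive integer k and δ > 0. Then there exists a constant C_k depending only on k such that |f'(0)| ≤ C_k ( max_{0 ≤ j ≤ k} |f(jδ)| / δ + sup_{t ∈ [0,kδ]} |f^{(k+1)}(t)| · δ^k ). -/

import Mathlib

/-!
Taylor-expand `f` at `0` to order `k` and evaluate at the nodes `jδ`, `j = 0, …, k`. Since the
Vandermonde matrix of the nodes `0, 1, …, k` is invertible, there are weights `c_j`, depending only
on `k`, with `∑ c_j j^i = [i = 1]` for `i ≤ k`; they annihilate every Taylor coefficient except the
first, so `∑ c_j T(jδ) = δ f'(0)`. Replacing `T(jδ)` by `f(jδ)` costs at most the Lagrange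
remainder `M (kδ)^(k+1)`, and dividing by `δ` gives the bound with `C_k = 1 + ∑ |c_j| (1 + k^(k+1))`.
-/

open Finset Set
open scoped Nat

theorem exists_sum_mul_pow_eq_of_injective {K : Type*} [Field K] {n : ℕ} {v : Fin n → K}
    (hv : Function.Injective v) (e : ℕ → K) :
    ∃ c : Fin n → K, ∀ i < n, ∑ j, c j * v j ^ i = e i := by
  classical
  set V := Matrix.vandermonde v
  have hV : IsUnit V.det := isUnit_iff_ne_zero.2 (Matrix.det_vandermonde_ne_zero_iff.2 hv)
  set e' : Fin n → K := fun i => e i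
  have hinv : Matrix.vecMul (Matrix.vecMul e' V⁻¹) V = e' := by
    rw [Matrix.vecMul_vecMul, Matrix.nonsing_inv_mul V hV, Matrix.vecMul_one]
  refine ⟨Matrix.vecMul e' V⁻¹, fun i hi => ?_⟩
  simpa [V, e', Matrix.vecMul, dotProduct] using congrFun hinv ⟨i, hi⟩

theorem sum_mul_taylorWithinEval_eq_mul_derivWithin {f : ℝ → ℝ} {s : Set ℝ} {n m : ℕ}
    (hn : 0 < n) {c v : Fin m → ℝ} (hc : ∀ i < n + 1, ∑ j, c j * v j ^ i = if i = 1 then 1 else 0)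
    (x₀ δ : ℝ) :
    ∑ j, c j * taylorWithinEval f n s x₀ (x₀ + v j * δ) = δ * derivWithin f s x₀ := by
  simp_rw [taylor_within_apply, add_sub_cancel_left, mul_sum]
  rw [sum_comm]
  calc ∑ i ∈ range (n + 1), ∑ j, c j * (((i ! : ℝ)⁻¹ * (v j * δ) ^ i) •
          iteratedDerivWithin i f s x₀)
      = ∑ i ∈ range (n + 1), ((i ! : ℝ)⁻¹ * δ ^ i * iteratedDerivWithin i f s x₀) *
          ∑ j, c j * v j ^ i := by
        refine sum_congr rfl fun i _ => ?_
        rw [mul_sum]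
        refine sum_congr rfl fun j _ => ?_
        rw [smul_eq_mul, mul_pow]
        ring
    _ = δ * derivWithin f s x₀ := by
        rw [sum_congr rfl fun i hi => by rw [hc i (mem_range.1 hi)]]
        simp [mem_range.2 (Nat.succ_lt_succ hn), iteratedDerivWithin_one, mul_comm]

theorem abs_sub_taylorWithinEval_le {f : ℝ → ℝ} {a b M x : ℝ} {n : ℕ} (hab : a ≤ b)
    (hf : ContDiffOn ℝ (n + 1 : ℕ) f (Icc a b)) (hx : x ∈ Icc a b)
    (hM : ∀ y ∈ Icc a b, |iteratedDerivWithin (n + 1) f (Icc a b) y| ≤ M) :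
    |f x - taylorWithinEval f n (Icc a b) a x| ≤ M * (b - a) ^ (n + 1) := by
  have hM0 : 0 ≤ M := (abs_nonneg _).trans (hM a (left_mem_Icc.2 hab))
  have hxa : 0 ≤ x - a := sub_nonneg.2 hx.1
  calc |f x - taylorWithinEval f n (Icc a b) a x|
      ≤ M * (x - a) ^ (n + 1) / n ! :=
        taylor_mean_remainder_bound hab (by exact_mod_cast hf) hx hM
    _ ≤ M * (x - a) ^ (n + 1) :=
        div_le_self (by positivity) (by exact_mod_cast Nat.one_le_iff_ne_zero.2 n.factorial_ne_zero)
    _ ≤ M * (b - a) ^ (n + 1) := by gcongr; linarith [hx.2]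

theorem abs_sum_mul_le_sum_abs_mul {ι : Type*} (t : Finset ι) (c y : ι → ℝ) {B : ℝ}
    (hy : ∀ j ∈ t, |y j| ≤ B) :
    |∑ j ∈ t, c j * y j| ≤ (∑ j ∈ t, |c j|) * B := by
  rw [sum_mul]
  refine (abs_sum_le_sum_abs _ _).trans (sum_le_sum fun j hj => ?_)
  rw [abs_mul]
  exact mul_le_mul_of_nonneg_left (hy j hj) (abs_nonneg _)

theorem mul_abs_derivWithin_le_of_moments {f : ℝ → ℝ} {a b δ A M : ℝ} {n m : ℕ} (hn : 0 < n)
    {c v : Fin m → ℝ} (hc : ∀ i < n + 1, ∑ j, c j * v j ^ i = if i = 1 then 1 else 0)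
    (hδ : 0 < δ) (hab : a ≤ b) (hf : ContDiffOn ℝ (n + 1 : ℕ) f (Icc a b))
    (hv : ∀ j, a + v j * δ ∈ Icc a b) (hA : ∀ j, |f (a + v j * δ)| ≤ A)
    (hM : ∀ y ∈ Icc a b, |iteratedDerivWithin (n + 1) f (Icc a b) y| ≤ M) :
    δ * |derivWithin f (Icc a b) a| ≤ (∑ j, |c j|) * (A + M * (b - a) ^ (n + 1)) := by
  have htaylor (j : Fin m) :
      |taylorWithinEval f n (Icc a b) a (a + v j * δ)| ≤ A + M * (b - a) ^ (n + 1) := by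
    have hrem := abs_sub_taylorWithinEval_le hab hf (hv j) hM
    rw [abs_sub_comm] at hrem
    linarith [abs_sub_abs_le_abs_sub (taylorWithinEval f n (Icc a b) a (a + v j * δ))
      (f (a + v j * δ)), hA j]
  have hbound := abs_sum_mul_le_sum_abs_mul univ c _ fun j _ => htaylor j
  rwa [sum_mul_taylorWithinEval_eq_mul_derivWithin hn hc, abs_mul, abs_of_pos hδ] at hbound

theorem stmt9 (k : ℕ) (hk : 0 < k) :
    ∃ C : ℝ, 0 < C ∧ ∀ δ : ℝ, 0 < δ → ∀ f : ℝ → ℝ,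
      ContDiffOn ℝ (k + 1 : ℕ) f (Set.Icc 0 ((k : ℝ) * δ)) →
      ∀ A M : ℝ,
        (∀ j : ℕ, j ≤ k → |f ((j : ℝ) * δ)| ≤ A) →
        (∀ t ∈ Set.Icc (0 : ℝ) ((k : ℝ) * δ),
          |iteratedDerivWithin (k + 1) f (Set.Icc 0 ((k : ℝ) * δ)) t| ≤ M) →
        |derivWithin f (Set.Icc 0 ((k : ℝ) * δ)) 0| ≤ C * (A / δ + M * δ ^ k) := by
  obtain ⟨c, hc⟩ := exists_sum_mul_pow_eq_of_injective (v := fun j : Fin (k + 1) => (j : ℝ))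
    (Nat.cast_injective.comp Fin.val_injective) fun i => if i = 1 then 1 else 0
  set s := ∑ j, |c j|
  set K := (k : ℝ) ^ (k + 1)
  refine ⟨1 + s * (1 + K), by positivity, ?_⟩
  intro δ hδ f hf A M hA hM
  have hkδ : 0 ≤ (k : ℝ) * δ := by positivity
  have hδD := mul_abs_derivWithin_le_of_moments hk hc hδ hkδ hf
    (fun j => by rw [zero_add]; exact ⟨by positivity, by gcongr; exact_mod_cast j.is_le⟩)
    (fun j => by rw [zero_add]; exact hA j j.is_le) hM
  have hA0 : 0 ≤ A := (abs_nonneg _).trans (hA 0 k.zero_le)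
  have hM0 : 0 ≤ M := (abs_nonneg _).trans (hM 0 (left_mem_Icc.2 hkδ))
  have hs : 0 ≤ s := sum_nonneg fun j _ => abs_nonneg (c j)
  calc |derivWithin f (Icc 0 ((k : ℝ) * δ)) 0|
      ≤ s * (A / δ) + s * K * (M * δ ^ k) :=
        le_of_mul_le_mul_left (hδD.trans_eq (by field_simp; ring)) hδ
    _ ≤ (1 + s * (1 + K)) * (A / δ + M * δ ^ k) := by
        have hX : 0 ≤ A / δ := by positivity
        have hY : 0 ≤ M * δ ^ k := by positivity
        nlinarith [mul_nonneg hs hX, mul_nonneg hs hY, mul_nonneg hs (by positivity : 0 ≤ K)]
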